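/- arXiv:math/0610153 — 2 statements merged into one kernel-verified Lean document; each statement's English description precedes it below -/
import Mathlib

section
/- Let u be a semiclassical moment functional on real polynomials in d variables, with data Φ symmetric d×d of degree p, Ψ of size d×1 with degree q ≥ 1, s = max{p−2, q−1}, let L be the associated second-order operator, and let {ℙ_n}_{n≥0} be a WOPS with respect to u. Then: (i) for every n ≥ s+1 there exist constant real matrices Λ_i^n of size r_i×r_n, for n−s ≤ i ≤ n+s, such that L[ℙ_n^t] = Σ_{i=n−s}^{n+s} ℙ_i^t Λ_i^n; and (ii) for every 0 ≤ n ≤ s there exist constant real matrices Λ_i^n of size r_i×r_n, for 1 ≤ i ≤ n+s, such that L[ℙ_n^t] = Σ_{i=1}^{n+s} ℙ_i^t Λ_i^n (in particular the coefficient of ℙ_0^t is always zero). -/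
open MvPolynomial Matrix Finset MeasureTheory

noncomputable section

/-- Real polynomials in `d` variables. -/
abbrev MPoly (d : ℕ) := MvPolynomial (Fin d) ℝ

/-- A moment functional: a linear functional on `MPoly d`. -/
abbrev MomF (d : ℕ) := MPoly d →ₗ[ℝ] ℝ

/-- `r_n = binom(n + d - 1, n)`, the dimension of the space of homogeneous
polynomials of degree `n` in `d` variables. -/
def rdim (d n : ℕ) : ℕ := (n + d - 1).choose n

/-- Entrywise application of a moment functional to a polynomial matrix. -/
def mApply {d : ℕ} (u : MomF d) {m n : Type*} (M : Matrix m n (MPoly d)) : Matrix m n ℝ :=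
  Matrix.of fun i j => u (M i j)

/-- The matrix Pearson equation `div(Φ u) = Ψᵗ u`, i.e. `⟨u, Φ ∇f + Ψ f⟩ = 0`
for every polynomial `f` (a system of `d` scalar equations). -/
def Pearson {d : ℕ} (u : MomF d) (Φ : Matrix (Fin d) (Fin d) (MPoly d))
    (Ψ : Fin d → MPoly d) : Prop :=
  ∀ f : MPoly d, ∀ i : Fin d, u (∑ j, Φ i j * pderiv j f + Ψ i * f) = 0

/-- Degree of a polynomial matrix: max of total degrees of the entries. -/
def matDeg {d : ℕ} {m n : Type*} [Fintype m] [Fintype n]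
    (M : Matrix m n (MPoly d)) : ℕ :=
  Finset.univ.sup fun p : m × n => (M p.1 p.2).totalDegree

/-- Degree of a polynomial (column) vector. -/
def vecDeg {d : ℕ} {m : Type*} [Fintype m] (v : m → MPoly d) : ℕ :=
  Finset.univ.sup fun i => (v i).totalDegree

/-- The Jacobian `∇ℙᵗ`: the `d × m` matrix with `(i,k)` entry `∂ᵢ P k`. -/
def gradT {d m : ℕ} (P : Fin m → MPoly d) : Matrix (Fin d) (Fin m) (MPoly d) :=
  Matrix.of fun i k => pderiv i (P k)

/-- The Kronecker product `I_d ⊗ ℙᵗ`: the block-diagonal `d × (d·m)` matrix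
whose `d` diagonal blocks equal the row vector `ℙᵗ`. -/
def kronIdRow {d m : ℕ} (P : Fin m → MPoly d) :
    Matrix (Fin d) (Fin d × Fin m) (MPoly d) :=
  Matrix.of fun i jk => if i = jk.1 then P jk.2 else 0

/-- A constant real matrix viewed as a polynomial matrix. -/
def cmap {d : ℕ} {m n : Type*} (F : Matrix m n ℝ) : Matrix m n (MPoly d) :=
  F.map MvPolynomial.C

/-- `{ℙ_n}` is a weak orthogonal polynomial system with respect to `u`:
each entry of `ℙ_n` has total degree `n`, the entries of `ℙ_0, …, ℙ_n` form a
basis of the polynomials of total degree at most `n` (spanning + linear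
independence), `⟨u, ℙ_n ℙ_mᵗ⟩ = 0` for `n ≠ m`, and `H_n = ⟨u, ℙ_n ℙ_nᵗ⟩` is
nonsingular. -/
structure IsWOPS {d : ℕ} (u : MomF d) (P : (n : ℕ) → Fin (rdim d n) → MPoly d) : Prop where
  deg : ∀ n k, (P n k).totalDegree = n
  span : ∀ n : ℕ, MvPolynomial.restrictTotalDegree (Fin d) ℝ n ≤
    Submodule.span ℝ {g | ∃ m ≤ n, ∃ k, P m k = g}
  indep : LinearIndependent ℝ (fun p : (n : ℕ) × Fin (rdim d n) => P p.1 p.2)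
  orth : ∀ m n, m ≠ n → ∀ j k, u (P m j * P n k) = 0
  Hdet : ∀ n, (Matrix.of fun j k : Fin (rdim d n) => u (P n j * P n k)).det ≠ 0

/-- The matrix `H_n = ⟨u, ℙ_n ℙ_nᵗ⟩`. -/
def Hmat {d : ℕ} (u : MomF d) (P : (n : ℕ) → Fin (rdim d n) → MPoly d) (n : ℕ) :
    Matrix (Fin (rdim d n)) (Fin (rdim d n)) ℝ :=
  Matrix.of fun j k => u (P n j * P n k)

/-- The second-order differential operator
`L[f] = Σ_{i,j} φ_ij ∂²f/∂xᵢ∂xⱼ + Σ_i ψ_i ∂f/∂xᵢ` associated with `Φ`, `Ψ`. -/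
def Lop {d : ℕ} (Φ : Matrix (Fin d) (Fin d) (MPoly d)) (Ψ : Fin d → MPoly d)
    (f : MPoly d) : MPoly d :=
  (∑ i, ∑ j, Φ i j * pderiv i (pderiv j f)) + ∑ i, Ψ i * pderiv i f

/-!
The operator `L` is symmetric with respect to `u`: testing the Pearson equation against `g ∂ᵢf`
and summing over `i` gives `⟨u, g L[f]⟩ = -⟨u, ∇fᵗ Φ ∇g⟩`, which is symmetric in `f, g` because
`Φ` is. Moreover `deg L[f] ≤ deg f + s`. Expanding `L[ℙ_nᵗ]` in the WOPS up to degree `n + s`,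
the coefficient of `ℙ_mᵗ` is `H_m⁻¹ ⟨u, ℙ_m L[ℙ_nᵗ]⟩ = H_m⁻¹ ⟨u, L[ℙ_m] ℙ_nᵗ⟩`, which vanishes
by orthogonality when `m + s < n`, and for `m = 0` because `L` kills constants.
-/

namespace MvPolynomial

variable {σ R : Type*} [CommSemiring R]

theorem pderiv_eq_zero_of_totalDegree_eq_zero (i : σ) {f : MvPolynomial σ R}
    (hf : f.totalDegree = 0) : pderiv i f = 0 := by
  rw [totalDegree_eq_zero_iff_eq_C.mp hf, pderiv_C]

theorem totalDegree_pderiv_le (i : σ) (f : MvPolynomial σ R) :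
    (pderiv i f).totalDegree ≤ f.totalDegree - 1 := by
  refine Finset.sup_le fun m hm => ?_
  have hcoeff : coeff (m + Finsupp.single i 1) f ≠ 0 := by
    intro h
    rw [mem_support_iff, coeff_pderiv, h, zero_mul] at hm
    exact hm rfl
  have hdeg := le_totalDegree (mem_support_iff.mpr hcoeff)
  rw [Finsupp.sum_add_index' (fun _ => rfl) (fun _ _ _ => rfl),
    Finsupp.sum_single_index rfl] at hdeg
  omega

theorem totalDegree_mul_pderiv_le {g f : MvPolynomial σ R} {a b : ℕ}
    (hg : g.totalDegree ≤ a + 1) (hf : f.totalDegree ≤ b) (i : σ) :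
    (g * pderiv i f).totalDegree ≤ a + b := by
  obtain hf0 | hfpos := Nat.eq_zero_or_pos f.totalDegree
  · simp [pderiv_eq_zero_of_totalDegree_eq_zero i hf0]
  · have := totalDegree_pderiv_le i f
    exact (totalDegree_mul _ _).trans (by omega)

theorem apply_mul_mul_C (u : MvPolynomial σ R →ₗ[R] R) (g h : MvPolynomial σ R) (r : R) :
    u (g * (h * C r)) = r * u (g * h) := by
  rw [mul_comm h, mul_left_comm, ← smul_eq_C_mul, map_smul, smul_eq_mul]

end MvPolynomial

theorem totalDegree_le_matDeg {d : ℕ} {m n : Type*} [Fintype m] [Fintype n]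
    (M : Matrix m n (MPoly d)) (i : m) (j : n) : (M i j).totalDegree ≤ matDeg M :=
  Finset.le_sup (f := fun p : m × n => (M p.1 p.2).totalDegree) (Finset.mem_univ (i, j))

theorem totalDegree_le_vecDeg {d : ℕ} {m : Type*} [Fintype m] (v : m → MPoly d) (i : m) :
    (v i).totalDegree ≤ vecDeg v :=
  Finset.le_sup (f := fun i => (v i).totalDegree) (Finset.mem_univ i)

section Lop

variable {d : ℕ} {Φ : Matrix (Fin d) (Fin d) (MPoly d)} {Ψ : Fin d → MPoly d}

theorem totalDegree_Lop_le {s : ℕ} (hΦ : ∀ i j, (Φ i j).totalDegree ≤ s + 2)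
    (hΨ : ∀ i, (Ψ i).totalDegree ≤ s + 1) (f : MPoly d) :
    (Lop Φ Ψ f).totalDegree ≤ f.totalDegree + s := by
  obtain hf0 | hfpos := Nat.eq_zero_or_pos f.totalDegree
  · simp [Lop, pderiv_eq_zero_of_totalDegree_eq_zero _ hf0]
  refine (totalDegree_add _ _).trans (max_le ?_ ?_)
  · refine totalDegree_finsetSum_le fun i _ => totalDegree_finsetSum_le fun j _ => ?_
    have := totalDegree_mul_pderiv_le (hΦ i j) (totalDegree_pderiv_le j f) i
    omega
  · refine totalDegree_finsetSum_le fun i _ => ?_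
    have := totalDegree_mul_pderiv_le (hΨ i) (le_refl f.totalDegree) i
    omega

theorem Lop_eq_zero_of_totalDegree_eq_zero {f : MPoly d} (hf : f.totalDegree = 0) :
    Lop Φ Ψ f = 0 := by
  simp [Lop, pderiv_eq_zero_of_totalDegree_eq_zero _ hf]

variable {u : MomF d}

theorem Pearson.apply_mul_Lop (hP : Pearson u Φ Ψ) (hΦ : Φ.IsSymm) (f g : MPoly d) :
    u (g * Lop Φ Ψ f) = -u (∑ i, ∑ j, Φ i j * (pderiv i f * pderiv j g)) := by
  have hsum : u (∑ i, (∑ j, Φ i j * pderiv j (g * pderiv i f) + Ψ i * (g * pderiv i f))) = 0 := by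
    rw [map_sum]
    exact Finset.sum_eq_zero fun i _ => hP (g * pderiv i f) i
  have hsecond : ∑ i, ∑ j, Φ i j * (g * pderiv j (pderiv i f))
      = g * ∑ i, ∑ j, Φ i j * pderiv i (pderiv j f) := by
    rw [Finset.mul_sum, Finset.sum_comm]
    refine Finset.sum_congr rfl fun i _ => ?_
    rw [Finset.mul_sum]
    refine Finset.sum_congr rfl fun j _ => ?_
    rw [hΦ.apply i j]
    ring
  have hexpand : ∑ i, (∑ j, Φ i j * pderiv j (g * pderiv i f) + Ψ i * (g * pderiv i f))
      = g * Lop Φ Ψ f + ∑ i, ∑ j, Φ i j * (pderiv i f * pderiv j g) := by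
    simp only [pderiv_mul, mul_add, Finset.sum_add_distrib, Lop, hsecond.symm, Finset.mul_sum]
    simp only [mul_comm (pderiv _ g), mul_left_comm g]
    abel
  rw [hexpand, map_add] at hsum
  linarith

theorem Pearson.apply_mul_Lop_comm (hP : Pearson u Φ Ψ) (hΦ : Φ.IsSymm) (f g : MPoly d) :
    u (g * Lop Φ Ψ f) = u (f * Lop Φ Ψ g) := by
  rw [hP.apply_mul_Lop hΦ, hP.apply_mul_Lop hΦ, Finset.sum_comm (f := fun i j => Φ i j * _)]
  refine congrArg (fun x => -u x) ?_
  refine Finset.sum_congr rfl fun i _ => Finset.sum_congr rfl fun j _ => ?_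
  rw [hΦ.apply i j]
  ring

end Lop

namespace IsWOPS

variable {d : ℕ} {u : MomF d} {P : (n : ℕ) → Fin (rdim d n) → MPoly d}

theorem exists_eq_sum (hW : IsWOPS u P) {N : ℕ} {f : MPoly d} (hf : f.totalDegree ≤ N) :
    ∃ c : (i : ℕ) → Fin (rdim d i) → ℝ,
      f = ∑ i ∈ Finset.range (N + 1), ∑ a, P i a * C (c i a) := by
  have hgen : {g | ∃ m ≤ N, ∃ k, P m k = g}
      = Set.range fun x : Σ m : Fin (N + 1), Fin (rdim d m) => P x.1 x.2 := by
    ext g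
    constructor
    · rintro ⟨m, hm, k, rfl⟩
      exact ⟨⟨⟨m, Nat.lt_succ_of_le hm⟩, k⟩, rfl⟩
    · rintro ⟨⟨m, k⟩, rfl⟩
      exact ⟨m, Nat.lt_succ_iff.mp m.isLt, k, rfl⟩
  have hmem := hW.span N ((mem_restrictTotalDegree _ _ _).mpr hf)
  rw [hgen, Submodule.mem_span_range_iff_exists_fun] at hmem
  obtain ⟨c, rfl⟩ := hmem
  refine ⟨fun i a => if h : i < N + 1 then c ⟨⟨i, h⟩, a⟩ else 0, ?_⟩
  rw [← Finset.univ_sigma_univ, Finset.sum_sigma, Finset.sum_range]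
  refine Finset.sum_congr rfl fun m _ => Finset.sum_congr rfl fun a _ => ?_
  dsimp only
  rw [dif_pos m.isLt, smul_eq_C_mul, mul_comm]

theorem apply_mul_sum_eq_mulVec (hW : IsWOPS u P) {N m : ℕ} (hm : m ≤ N)
    (c : (i : ℕ) → Fin (rdim d i) → ℝ) (j : Fin (rdim d m)) :
    u (P m j * ∑ i ∈ Finset.range (N + 1), ∑ a, P i a * C (c i a)) = (Hmat u P m *ᵥ c m) j := by
  simp only [Finset.mul_sum, map_sum, apply_mul_mul_C]
  rw [Finset.sum_eq_single_of_mem m (Finset.mem_range.mpr (Nat.lt_succ_of_le hm))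
    fun i _ hi => Finset.sum_eq_zero fun a _ => by rw [hW.orth m i hi.symm j a, mul_zero]]
  simp only [Matrix.mulVec, dotProduct, Hmat, Matrix.of_apply, mul_comm]

theorem apply_mul_eq_zero_of_totalDegree_lt (hW : IsWOPS u P) {n : ℕ} {f : MPoly d}
    (hf : f.totalDegree < n) (k : Fin (rdim d n)) : u (P n k * f) = 0 := by
  have hfn : f.totalDegree ≤ n - 1 := by omega
  obtain ⟨c, rfl⟩ := hW.exists_eq_sum hfn
  simp only [Finset.mul_sum, map_sum, apply_mul_mul_C]
  refine Finset.sum_eq_zero fun i hi => Finset.sum_eq_zero fun a _ => ?_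
  rw [hW.orth n i (by rw [Finset.mem_range] at hi; omega) k a, mul_zero]

theorem exists_eq_sum_of_orthogonal (hW : IsWOPS u P) {N : ℕ} {f : MPoly d}
    (hf : f.totalDegree ≤ N) {t : Finset ℕ} (ht : t ⊆ Finset.range (N + 1))
    (horth : ∀ m ≤ N, m ∉ t → ∀ j, u (P m j * f) = 0) :
    ∃ c : (i : ℕ) → Fin (rdim d i) → ℝ, f = ∑ i ∈ t, ∑ a, P i a * C (c i a) := by
  obtain ⟨c, rfl⟩ := hW.exists_eq_sum hf
  refine ⟨c, (Finset.sum_subset ht fun m hm hmt => ?_).symm⟩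
  have hmN : m ≤ N := Nat.lt_succ_iff.mp (Finset.mem_range.mp hm)
  have hcm : c m = 0 :=
    eq_zero_of_mulVec_eq_zero (M := Hmat u P m) (hW.Hdet m) <| funext fun j => by
      rw [← hW.apply_mul_sum_eq_mulVec hmN, horth m hmN hmt j, Pi.zero_apply]
  simp [hcm]

theorem exists_Lop_eq_sum (hW : IsWOPS u P) {Φ : Matrix (Fin d) (Fin d) (MPoly d)}
    {Ψ : Fin d → MPoly d} (hP : Pearson u Φ Ψ) (hΦ : Φ.IsSymm) {s : ℕ}
    (hΦdeg : ∀ i j, (Φ i j).totalDegree ≤ s + 2)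
    (hΨdeg : ∀ i, (Ψ i).totalDegree ≤ s + 1) (n : ℕ) {t : Finset ℕ}
    (ht : t ⊆ Finset.range (n + s + 1)) (hdrop : ∀ m ≤ n + s, m ∉ t → m + s < n ∨ m = 0) :
    ∃ Λ : (i : ℕ) → Matrix (Fin (rdim d i)) (Fin (rdim d n)) ℝ,
      ∀ k, Lop Φ Ψ (P n k) = ∑ i ∈ t, ∑ a, P i a * C (Λ i a k) := by
  have hdeg (m : ℕ) (k : Fin (rdim d m)) : (Lop Φ Ψ (P m k)).totalDegree ≤ m + s :=
    (totalDegree_Lop_le hΦdeg hΨdeg (P m k)).trans_eq (by rw [hW.deg])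
  have horth (m : ℕ) (hm : m + s < n ∨ m = 0) (j : Fin (rdim d m)) (k : Fin (rdim d n)) :
      u (P m j * Lop Φ Ψ (P n k)) = 0 := by
    rw [hP.apply_mul_Lop_comm hΦ]
    rcases hm with hm | rfl
    · exact hW.apply_mul_eq_zero_of_totalDegree_lt ((hdeg m j).trans_lt hm) k
    · rw [Lop_eq_zero_of_totalDegree_eq_zero (hW.deg 0 j), mul_zero, map_zero]
  choose c hc using fun k => hW.exists_eq_sum_of_orthogonal (hdeg n k) ht
    fun m hm hmt j => horth m (hdrop m hm hmt) j k
  exact ⟨fun i => Matrix.of fun a k => c k i a, hc⟩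

end IsWOPS

theorem differential_difference_relation_general
    {d : ℕ} (u : MomF d) (P : (n : ℕ) → Fin (rdim d n) → MPoly d)
    (hW : IsWOPS u P)
    (Φ : Matrix (Fin d) (Fin d) (MPoly d)) (hΦsym : Φ.IsSymm)
    (Ψ : Fin d → MPoly d)
    (p q : ℕ) (hp : matDeg Φ = p) (hq : vecDeg Ψ = q)
    (hPearson : Pearson u Φ Ψ)
    (s : ℕ) (hs : s = max (p - 2) (q - 1)) :
    (∀ n : ℕ, s + 1 ≤ n →
      ∃ Λ : (i : ℕ) → Matrix (Fin (rdim d i)) (Fin (rdim d n)) ℝ,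
        ∀ k, Lop Φ Ψ (P n k) =
          ∑ i ∈ Finset.Icc (n - s) (n + s), ∑ a, P i a * MvPolynomial.C (Λ i a k)) ∧
    (∀ n : ℕ, n ≤ s →
      ∃ Λ : (i : ℕ) → Matrix (Fin (rdim d i)) (Fin (rdim d n)) ℝ,
        ∀ k, Lop Φ Ψ (P n k) =
          ∑ i ∈ Finset.Icc 1 (n + s), ∑ a, P i a * MvPolynomial.C (Λ i a k)) := by
  have hΦdeg (i j : Fin d) : (Φ i j).totalDegree ≤ s + 2 := by
    have := totalDegree_le_matDeg Φ i j
    omega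
  have hΨdeg (i : Fin d) : (Ψ i).totalDegree ≤ s + 1 := by
    have := totalDegree_le_vecDeg Ψ i
    omega
  have hexpand := hW.exists_Lop_eq_sum hPearson hΦsym hΦdeg hΨdeg
  refine ⟨fun n hn => hexpand n ?_ ?_, fun n hn => hexpand n ?_ ?_⟩ <;> intro m <;>
    simp only [Finset.mem_Icc, Finset.mem_range] <;> omega

/-- **Matrix differential–difference relation.**
If `u` is semiclassical with data `Φ` (symmetric, degree `p`), `Ψ` (degree
`q ≥ 1`), `s = max{p−2, q−1}`, and `{ℙ_n}` is a WOPS for `u`, then: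
(i) for `n ≥ s+1` there are constant matrices `Λᵢⁿ`, `n−s ≤ i ≤ n+s`, with
`L[ℙ_nᵗ] = Σ_{i=n−s}^{n+s} ℙ_iᵗ Λᵢⁿ`; and
(ii) for `n ≤ s` there are constant matrices `Λᵢⁿ`, `1 ≤ i ≤ n+s`, with
`L[ℙ_nᵗ] = Σ_{i=1}^{n+s} ℙ_iᵗ Λᵢⁿ` (the coefficient of `ℙ_0ᵗ` vanishes). -/
theorem differential_difference_relation
    {d : ℕ} (u : MomF d) (P : (n : ℕ) → Fin (rdim d n) → MPoly d)
    (hW : IsWOPS u P)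
    (Φ : Matrix (Fin d) (Fin d) (MPoly d)) (hΦsym : Φ.IsSymm)
    (Ψ : Fin d → MPoly d)
    (p q : ℕ) (hp : matDeg Φ = p) (hq : vecDeg Ψ = q) (hq1 : 1 ≤ q)
    (hPearson : Pearson u Φ Ψ)
    (hdet : (mApply u Φ).det ≠ 0)
    (s : ℕ) (hs : s = max (p - 2) (q - 1)) :
    (∀ n : ℕ, s + 1 ≤ n →
      ∃ Λ : (i : ℕ) → Matrix (Fin (rdim d i)) (Fin (rdim d n)) ℝ,
        ∀ k, Lop Φ Ψ (P n k) =
          ∑ i ∈ Finset.Icc (n - s) (n + s), ∑ a, P i a * MvPolynomial.C (Λ i a k)) ∧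
    (∀ n : ℕ, n ≤ s →
      ∃ Λ : (i : ℕ) → Matrix (Fin (rdim d i)) (Fin (rdim d n)) ℝ,
        ∀ k, Lop Φ Ψ (P n k) =
          ∑ i ∈ Finset.Icc 1 (n + s), ∑ a, P i a * MvPolynomial.C (Λ i a k)) :=
  differential_difference_relation_general u P hW Φ hΦsym Ψ p q hp hq hPearson s hs
end
end

section
/- Let u be a semiclassical moment functional on real polynomials in d variables, with data Φ symmetric d×d of degree p, Ψ of size d×1 with degree q ≥ 1, s = max{p−2, q−1}, let L be the associated second-order operator, and let {ℙ_n}_{n≥0} be a WOPS with respect to u with H_m = ⟨u, ℙ_m ℙ_m^t⟩. Then for all m, n ≥ 0, the expansion coefficient Λ_m^n of L[ℙ_n^t] in the basis {ℙ_i}, defined by H_m Λ_m^n = ⟨u, ℙ_m L[ℙ_n^t]⟩, satisfies H_m Λ_m^n = −⟨u, (∇ℙ_m^t)^t Φ ∇ℙ_n^t⟩. -/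
open MvPolynomial Matrix Finset MeasureTheory

noncomputable section

/-! The Pearson equation, applied to `g ∂ᵢf` and summed over `i`, is an integration by parts:
`⟨u, g L[f]⟩ = -⟨u, ∇gᵗ Φ ∇f⟩`. Taking `g = ℙ_m` and `f = ℙ_n` entrywise gives the identity. -/

theorem MvPolynomial.pderiv_pderiv_comm {R σ : Type*} [CommSemiring R] (i j : σ)
    (f : MvPolynomial σ R) : pderiv i (pderiv j f) = pderiv j (pderiv i f) := by
  induction f using MvPolynomial.induction_on with
  | C a => simp only [pderiv_C, map_zero]
  | add p q hp hq => simp only [map_add, hp, hq]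
  | mul_X p k hp =>
    have hX : ∀ a b : σ, pderiv a (pderiv b (X k : MvPolynomial σ R)) = 0 := by
      classical
      intro a b
      rw [pderiv_X, Pi.single_apply]
      split_ifs <;> simp
    simp only [pderiv_mul, map_add, hp, hX]
    ring

theorem sum_pearson_mul_pderiv_eq {d : ℕ} {Φ : Matrix (Fin d) (Fin d) (MPoly d)}
    (hΦ : Φ.IsSymm) (Ψ : Fin d → MPoly d) (g f : MPoly d) :
    ∑ i, (∑ j, Φ i j * pderiv j (g * pderiv i f) + Ψ i * (g * pderiv i f))
      = g * Lop Φ Ψ f + ∑ i, ∑ j, pderiv i g * Φ i j * pderiv j f := by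
  have hgrad : ∑ i, ∑ j, Φ i j * (pderiv j g * pderiv i f)
      = ∑ i, ∑ j, pderiv i g * Φ i j * pderiv j f := by
    rw [Finset.sum_comm]
    refine Finset.sum_congr rfl fun i _ => Finset.sum_congr rfl fun j _ => ?_
    rw [hΦ.apply j i]
    ring
  have hsplit : ∀ i, ∑ j, Φ i j * pderiv j (g * pderiv i f) + Ψ i * (g * pderiv i f)
      = ∑ j, Φ i j * (pderiv j g * pderiv i f)
        + (∑ j, g * (Φ i j * pderiv i (pderiv j f)) + g * (Ψ i * pderiv i f)) := by
    intro i
    have hleibniz : ∀ j, Φ i j * pderiv j (g * pderiv i f)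
        = Φ i j * (pderiv j g * pderiv i f) + g * (Φ i j * pderiv i (pderiv j f)) := fun j => by
      rw [pderiv_mul, pderiv_pderiv_comm j i f]
      ring
    simp only [hleibniz, Finset.sum_add_distrib]
    ring
  simp only [hsplit, Finset.sum_add_distrib, hgrad, Lop, mul_add, Finset.mul_sum]
  abel

theorem Pearson.map_mul_Lop {d : ℕ} {u : MomF d} {Φ : Matrix (Fin d) (Fin d) (MPoly d)}
    {Ψ : Fin d → MPoly d} (hu : Pearson u Φ Ψ) (hΦ : Φ.IsSymm) (g f : MPoly d) :
    u (g * Lop Φ Ψ f) = -u (∑ i, ∑ j, pderiv i g * Φ i j * pderiv j f) := by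
  have hsum : u (∑ i, (∑ j, Φ i j * pderiv j (g * pderiv i f) + Ψ i * (g * pderiv i f))) = 0 := by
    rw [map_sum]
    exact Finset.sum_eq_zero fun i _ => hu (g * pderiv i f) i
  rw [sum_pearson_mul_pderiv_eq hΦ, map_add] at hsum
  exact eq_neg_of_add_eq_zero_left hsum

theorem gradT_transpose_mul_mul_gradT_apply {d m n : ℕ} (P : Fin m → MPoly d)
    (Φ : Matrix (Fin d) (Fin d) (MPoly d)) (Q : Fin n → MPoly d) (a : Fin m) (k : Fin n) :
    ((gradT P)ᵀ * Φ * gradT Q) a k = ∑ i, ∑ j, pderiv i (P a) * Φ i j * pderiv j (Q k) := by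
  simp only [Matrix.mul_apply, Matrix.transpose_apply, gradT, Matrix.of_apply, Finset.sum_mul]
  exact Finset.sum_comm

theorem expansion_coefficients_identity_general
    {d : ℕ} (u : MomF d) (P : (n : ℕ) → Fin (rdim d n) → MPoly d)
    (Φ : Matrix (Fin d) (Fin d) (MPoly d)) (hΦsym : Φ.IsSymm)
    (Ψ : Fin d → MPoly d)
    (hPearson : Pearson u Φ Ψ) :
    ∀ (m n : ℕ) (Λ : Matrix (Fin (rdim d m)) (Fin (rdim d n)) ℝ),
      Hmat u P m * Λ = mApply u (Matrix.of fun a k => P m a * Lop Φ Ψ (P n k)) →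
      Hmat u P m * Λ = -mApply u ((gradT (P m))ᵀ * Φ * gradT (P n)) := by
  intro m n Λ hΛ
  rw [hΛ]
  ext a k
  simp only [mApply, Matrix.of_apply, Matrix.neg_apply, hPearson.map_mul_Lop hΦsym,
    gradT_transpose_mul_mul_gradT_apply]

/-- **Fourier coefficients of `L[ℙ_nᵗ]`.**
If `u` is semiclassical with data `Φ` (symmetric, degree `p`), `Ψ`
(degree `q ≥ 1`), `s = max{p−2, q−1}`, and `{ℙ_n}` is a WOPS for `u`, then for
all `m, n ≥ 0` the expansion coefficient `Λ_mⁿ` of `L[ℙ_nᵗ]`, defined by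
`H_m Λ_mⁿ = ⟨u, ℙ_m L[ℙ_nᵗ]⟩`, satisfies
`H_m Λ_mⁿ = −⟨u, (∇ℙ_mᵗ)ᵗ Φ ∇ℙ_nᵗ⟩`. -/
theorem expansion_coefficients_identity
    {d : ℕ} (u : MomF d) (P : (n : ℕ) → Fin (rdim d n) → MPoly d)
    (hW : IsWOPS u P)
    (Φ : Matrix (Fin d) (Fin d) (MPoly d)) (hΦsym : Φ.IsSymm)
    (Ψ : Fin d → MPoly d)
    (p q : ℕ) (hp : matDeg Φ = p) (hq : vecDeg Ψ = q) (hq1 : 1 ≤ q)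
    (hPearson : Pearson u Φ Ψ)
    (hdet : (mApply u Φ).det ≠ 0)
    (s : ℕ) (hs : s = max (p - 2) (q - 1)) :
    ∀ (m n : ℕ) (Λ : Matrix (Fin (rdim d m)) (Fin (rdim d n)) ℝ),
      Hmat u P m * Λ = mApply u (Matrix.of fun a k => P m a * Lop Φ Ψ (P n k)) →
      Hmat u P m * Λ = -mApply u ((gradT (P m))ᵀ * Φ * gradT (P n)) :=
  expansion_coefficients_identity_general u P Φ hΦsym Ψ hPearson
end
end
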